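/- If κ is a weakly shrewd cardinal, then κ is a regular cardinal. -/

import Mathlib

universe u

open Cardinal

/-- Formulas of the language of set theory with an additional unary predicate
symbol `pred`; variables are indexed by natural numbers. -/
inductive SF : Type
  | mem : ℕ → ℕ → SF
  | eq : ℕ → ℕ → SF
  | pred : ℕ → SF
  | not : SF → SF
  | and : SF → SF → SF
  | ex : ℕ → SF → SF

/-- The free variables of a formula. -/
def SF.fv : SF → Set ℕ
  | .mem i j => {i, j}
  | .eq i j => {i, j}
  | .pred i => {i}
  | .not φ => φ.fv
  | .and φ ψ => φ.fv ∪ ψ.fv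
  | .ex k φ => φ.fv \ {k}

/-- Tarskian satisfaction of a formula in the structure whose carrier is the
class `S`, where the membership symbol is interpreted by the binary relation `E`
and the extra unary predicate symbol by the class `P`, under the valuation `v`. -/
def Sat (P : Set ZFSet.{u}) (E : ZFSet.{u} → ZFSet.{u} → Prop) (S : Set ZFSet.{u}) :
    SF → (ℕ → ZFSet.{u}) → Prop
  | .mem i j, v => E (v i) (v j)
  | .eq i j, v => v i = v j
  | .pred i, v => v i ∈ P
  | .not φ, v => ¬ Sat P E S φ v
  | .and φ ψ, v => Sat P E S φ v ∧ Sat P E S ψ v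
  | .ex k φ, v => ∃ x, x ∈ S ∧ Sat P E S φ (Function.update v k x)

/-- Satisfaction in the `∈`-structure with carrier `S`, the predicate symbol
being interpreted by the class `R`. -/
def SatIn (R : Set ZFSet.{u}) (S : Set ZFSet.{u}) (φ : SF) (v : ℕ → ZFSet.{u}) : Prop :=
  Sat R (· ∈ ·) S φ v

/-- Δ₀-formulas: built from atomic formulas by propositional connectives and
bounded existential quantification. -/
inductive IsDeltaZero : SF → Prop
  | mem (i j) : IsDeltaZero (.mem i j)
  | eq (i j) : IsDeltaZero (.eq i j)
  | pred (i) : IsDeltaZero (.pred i)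
  | not {φ} : IsDeltaZero φ → IsDeltaZero (.not φ)
  | and {φ ψ} : IsDeltaZero φ → IsDeltaZero ψ → IsDeltaZero (.and φ ψ)
  | bex {φ} (k j) : IsDeltaZero φ → IsDeltaZero (.ex k (.and (.mem k j) φ))

mutual
  /-- Σₙ-formulas of the Lévy hierarchy. -/
  inductive IsSigma : ℕ → SF → Prop
    | of_zero {φ} : IsDeltaZero φ → IsSigma 0 φ
    | of_pi {n φ} : IsPi n φ → IsSigma (n + 1) φ
    | ex {n φ} (k) : IsSigma (n + 1) φ → IsSigma (n + 1) (.ex k φ)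
  /-- Πₙ-formulas of the Lévy hierarchy. -/
  inductive IsPi : ℕ → SF → Prop
    | of_zero {φ} : IsDeltaZero φ → IsPi 0 φ
    | not {n φ} : IsSigma (n + 1) φ → IsPi (n + 1) (.not φ)
end

/-- The valuation sending `v₀` to `a`, `v₁` to `b` and all other variables to `∅`. -/
def val2 (a b : ZFSet.{u}) : ℕ → ZFSet.{u} := fun i => if i = 0 then a else if i = 1 then b else ∅

/-- `x` is a (von Neumann) ordinal. -/
def ZOrd (x : ZFSet.{u}) : Prop := x.IsTransitive ∧ ∀ y ∈ x, ZFSet.IsTransitive y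

/-- `κ` is a (von Neumann) cardinal. -/
def ZCard (κ : ZFSet.{u}) : Prop := ZOrd κ ∧ ∀ β ∈ κ, #β.toSet < #κ.toSet

/-- `κ` is an infinite cardinal. -/
def InfCard (κ : ZFSet.{u}) : Prop := ZCard κ ∧ ZFSet.omega ⊆ κ

/-- `κ` is an infinite regular cardinal: every cofinal subset of `κ` has
cardinality `κ`. -/
def ZRegular (κ : ZFSet.{u}) : Prop :=
  InfCard κ ∧ ∀ x : ZFSet.{u}, x ⊆ κ →
    (∀ β ∈ κ, ∃ γ ∈ x, β ∈ γ ∨ β = γ) → #x.toSet = #κ.toSet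

/-- `C` is a closed unbounded (class of) subset(s) of the ordinal `κ`. -/
def ZClub (C : Set ZFSet.{u}) (κ : ZFSet.{u}) : Prop :=
  (∀ γ ∈ C, γ ∈ κ) ∧ (∀ β ∈ κ, ∃ γ ∈ C, β ∈ γ) ∧
    (∀ β ∈ κ, (∃ γ, γ ∈ β) → (∀ γ ∈ β, ∃ δ ∈ C, γ ∈ δ ∧ δ ∈ β) → β ∈ C)

/-- `S` is stationary in `κ`: it meets every closed unbounded subset of `κ`. -/
def ZStationary (S : Set ZFSet.{u}) (κ : ZFSet.{u}) : Prop :=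
  ∀ C, ZClub C κ → ∃ γ ∈ C, γ ∈ S

/-- `H(θ)`: the class of all sets hereditarily of cardinality less than `θ`. -/
def HSet (θ : ZFSet.{u}) : Set ZFSet.{u} :=
  {x | ∃ t : ZFSet.{u}, t.IsTransitive ∧ x ⊆ t ∧ #t.toSet < #θ.toSet}

/-- `θ` is the cardinal successor `κ⁺` of `κ`. -/
def SuccCardOf (θ κ : ZFSet.{u}) : Prop :=
  ZCard θ ∧ κ ∈ θ ∧ ∀ μ, ZCard μ → κ ∈ μ → θ ⊆ μ

/-- `κ` is a weakly shrewd cardinal. -/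
def WeaklyShrewd (κ : ZFSet.{u}) : Prop :=
  InfCard κ ∧
    ∀ (φ : SF) (θ A : ZFSet.{u}), φ.fv ⊆ {0, 1} → ZCard θ → κ ∈ θ → A ⊆ κ →
      SatIn ∅ (HSet θ) φ (val2 A κ) →
      ∃ κ' θ' : ZFSet.{u}, ZCard κ' ∧ ZCard θ' ∧ κ' ∈ θ' ∧ κ' ∈ κ ∧
        SatIn ∅ (HSet θ') φ (val2 (A ∩ κ') κ')

/-- `j` is an elementary embedding of the `∈`-structure (with predicate `R`)
with carrier `X` into the one with carrier `Y`. -/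
def ElemEmbOn (R : Set ZFSet.{u}) (X Y : Set ZFSet.{u}) (j : ZFSet.{u} → ZFSet.{u}) : Prop :=
  (∀ x ∈ X, j x ∈ Y) ∧
    ∀ (φ : SF) (v : ℕ → ZFSet.{u}), (∀ i, v i ∈ X) →
      (SatIn R X φ v ↔ SatIn R Y φ (fun i => j (v i)))

/-- `X` is an elementary submodel of `Y` (as `∈`-structures with predicate `R`). -/
def ElemSub (R : Set ZFSet.{u}) (X Y : Set ZFSet.{u}) : Prop :=
  X ⊆ Y ∧ ∀ (φ : SF) (v : ℕ → ZFSet.{u}), (∀ i, v i ∈ X) → (SatIn R X φ v ↔ SatIn R Y φ v)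

/-- `X` is a Σₙ-elementary submodel of `Y`. -/
def SigmaElemSub (R : Set ZFSet.{u}) (n : ℕ) (X Y : Set ZFSet.{u}) : Prop :=
  X ⊆ Y ∧ ∀ (φ : SF), IsSigma n φ → ∀ (v : ℕ → ZFSet.{u}), (∀ i, v i ∈ X) →
    (SatIn R X φ v ↔ SatIn R Y φ v)

/-!
Suppose `κ` were singular, with `c = cf κ < κ`, and let `⟨f i | i < c⟩` be a strictly increasing
cofinal sequence in `κ`. The set `A = {c} ∪ {c + f i | i < c} ⊆ κ` has least element `c` and
cardinality `c`, so `H(θ)` satisfies "some element of `A` injects into `A`", the injection being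
coded by a set of unordered pairs. Weak shrewdness reflects this to some `κ̄ < κ`: an element of
`A ∩ κ̄`, which is an ordinal `≥ c`, injects into `A ∩ κ̄`. But `κ̄ ≤ f i` for some `i < c`, so
`A ∩ κ̄ ⊆ {c} ∪ {c + f j | j < i}` has fewer than `c` elements.
-/

open Ordinal

theorem zOrd_iff_isOrdinal {x : ZFSet.{u}} : ZOrd x ↔ x.IsOrdinal :=
  ZFSet.isOrdinal_iff_forall_mem_isTransitive.symm

theorem mk_toSet_toZFSet (o : Ordinal.{u}) : #o.toZFSet.toSet = lift.{u + 1} o.card :=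
  ZFSet.cardinalMk_coe_sort.trans (congrArg _ (card_toZFSet o))

theorem zCard_ord_toZFSet (c : Cardinal.{u}) : ZCard c.ord.toZFSet := by
  refine ⟨zOrd_iff_isOrdinal.2 (ZFSet.isOrdinal_toZFSet _), fun β hβ => ?_⟩
  obtain ⟨o, ho, rfl⟩ := mem_toZFSet_iff.1 hβ
  rw [mk_toSet_toZFSet, mk_toSet_toZFSet, card_ord, Cardinal.lift_lt]
  exact lt_ord.1 ho

theorem ZCard.exists_eq_ord_toZFSet {κ : ZFSet.{u}} (h : ZCard κ) :
    ∃ c : Cardinal.{u}, κ = c.ord.toZFSet := by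
  obtain ⟨o, rfl⟩ := ZFSet.isOrdinal_iff_mem_range_toZFSet.1 (zOrd_iff_isOrdinal.1 h.1)
  refine ⟨o.card, congrArg _ ((ord_card_le o).antisymm' (not_lt.1 fun hlt => ?_))⟩
  have := h.2 _ (toZFSet_mem_toZFSet_iff.2 hlt)
  rw [mk_toSet_toZFSet, mk_toSet_toZFSet, card_ord] at this
  exact this.false

theorem natCast_toZFSet_mem_omega (n : ℕ) : (n : Ordinal.{u}).toZFSet ∈ ZFSet.omega := by
  induction n with
  | zero => simp [ZFSet.omega_zero]
  | succ n ih => rw [Nat.cast_succ, toZFSet_add_one]; exact ZFSet.omega_succ ih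

theorem InfCard.aleph0_le {c : Cardinal.{u}} (h : InfCard c.ord.toZFSet) : ℵ₀ ≤ c := by
  refine not_lt.1 fun hc => ?_
  obtain ⟨n, rfl⟩ := lt_aleph0.1 hc
  rw [ord_natCast] at h
  exact ZFSet.mem_irrefl _ (h.2 (natCast_toZFSet_mem_omega n))

theorem zRegular_of_le_cof_ord {c : Cardinal.{u}} (hinf : InfCard c.ord.toZFSet)
    (hc : c ≤ c.ord.cof) : ZRegular c.ord.toZFSet := by
  refine ⟨hinf, fun x hxc hcof => le_antisymm (mk_le_mk_of_subset fun z hz => hxc hz) ?_⟩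
  let s : Set (Set.Iio c.ord) := {o | o.1.toZFSet ∈ x}
  have hs : IsCofinal s := by
    rintro ⟨o, ho⟩
    obtain ⟨γ, hγx, hoγ⟩ := hcof _ (toZFSet_mem_toZFSet_iff.2 ho)
    obtain ⟨o', ho', rfl⟩ := mem_toZFSet_iff.1 (hxc hγx)
    refine ⟨⟨o', ho'⟩, hγx, ?_⟩
    rcases hoγ with hlt | heq
    · exact (toZFSet_mem_toZFSet_iff.1 hlt).le
    · exact (toZFSet_injective heq).le
  have hsx : #s ≤ #x.toSet :=
    mk_le_of_injective (f := fun o : s => (⟨o.1.1.toZFSet, o.2⟩ : x.toSet))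
      fun o o' h => Subtype.ext (Subtype.ext (toZFSet_injective (congrArg Subtype.val h)))
  calc #c.ord.toZFSet.toSet = lift.{u + 1} c := by rw [mk_toSet_toZFSet, card_ord]
    _ ≤ lift.{u + 1} c.ord.cof := lift_le.2 hc
    _ = Order.cof (Set.Iio c.ord) := by rw [cof_Iio, lift_cof]
    _ ≤ #s := Order.cof_le hs
    _ ≤ #x.toSet := hsx

/-- `F` codes, through its members read as unordered pairs, an injection of `m` into `A`. -/
def PairsInjectively (F m A : ZFSet.{u}) : Prop :=
  (∀ α ∈ m, ∃ a ∈ A, ∃ p ∈ F, α ∈ p ∧ a ∈ p) ∧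
    ∀ α ∈ m, ∀ β ∈ m, ∀ a ∈ A, ∀ p ∈ F, ∀ q ∈ F, α ∈ p → a ∈ p → β ∈ q → a ∈ q → α = β

theorem PairsInjectively.mk_le {F m A : ZFSet.{u}} (h : PairsInjectively F m A) :
    #m.toSet ≤ #A.toSet := by
  choose g hgA p hpF hαp hgp using h.1
  refine mk_le_of_injective (f := fun α : m.toSet => (⟨g α α.2, hgA α α.2⟩ : A.toSet)) ?_
  rintro ⟨α, hα⟩ ⟨β, hβ⟩ hαβ
  have hg : g α hα = g β hβ := congrArg Subtype.val hαβ
  exact Subtype.ext (h.2 α hα β hβ _ (hgA α hα) _ (hpF α hα) _ (hpF β hβ) (hαp α hα) (hgp α hα)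
    (hαp β hβ) (hg ▸ hgp β hβ))

namespace SF

def imp (φ ψ : SF) : SF := .not (.and φ (.not ψ))

def all (k : ℕ) (φ : SF) : SF := .not (.ex k (.not φ))

def bex (k j : ℕ) (φ : SF) : SF := .ex k (.and (.mem k j) φ)

def ball (k j : ℕ) (φ : SF) : SF := all k (imp (.mem k j) φ)

/-- With `v₀ = A`, `v₂ = m`, `v₃ = F`, `v₄ = α`, `v₅ = β`, `v₆ = a`, `v₇ = p`, `v₈ = q`, this is
`∃ m ∈ A, ∃ F, PairsInjectively F m A`. -/
def existsMemPairsInjectively : SF :=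
  bex 2 0 (.ex 3 (.and
    (ball 4 2 (bex 6 0 (bex 7 3 (.and (.mem 4 7) (.mem 6 7)))))
    (ball 4 2 (ball 5 2 (ball 6 0 (ball 7 3 (ball 8 3
      (imp (.and (.and (.mem 4 7) (.mem 6 7)) (.and (.mem 5 8) (.mem 6 8))) (.eq 4 5)))))))))

theorem fv_existsMemPairsInjectively : existsMemPairsInjectively.fv ⊆ {0, 1} := by
  intro i hi
  simp only [existsMemPairsInjectively, bex, ball, all, imp, fv, Set.union_insert,
    Set.union_singleton, Set.mem_insert_iff, Nat.reduceEqDiff, Set.mem_singleton_iff, or_true,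
    Set.insert_eq_of_mem, or_false, Nat.succ_ne_self, or_self, Set.mem_sdiff, Set.mem_union] at hi
  simp only [Set.mem_insert_iff, Set.mem_singleton_iff]
  omega

end SF

theorem satIn_existsMemPairsInjectively_iff {R S : Set ZFSet.{u}}
    (hS : ∀ x ∈ S, ∀ y ∈ x, y ∈ S) (A k : ZFSet.{u}) :
    SatIn R S SF.existsMemPairsInjectively (val2 A k) ↔
      ∃ m ∈ S, m ∈ A ∧ ∃ F ∈ S, PairsInjectively F m A := by
  simp only [SatIn, Sat, SF.existsMemPairsInjectively, SF.imp, SF.all, SF.bex, SF.ball, val2,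
    Function.update_apply, PairsInjectively, OfNat.zero_ne_ofNat, ↓reduceIte, Nat.reduceEqDiff,
    not_exists, not_and, not_forall, not_not, and_imp]
  refine exists_congr fun m => and_congr_right fun hm => and_congr_right fun _ =>
    exists_congr fun F => and_congr_right fun hF => and_congr ?_ ?_
  -- The quantifiers relativized to `S` range over elements of `m`, `F` and members of `F`,
  -- all of which lie in the transitive class `S`.
  · grind
  · grind

theorem HSet.mem_of_mem {θ x y : ZFSet.{u}} (hx : x ∈ HSet θ) (hy : y ∈ x) : y ∈ HSet θ := by
  obtain ⟨t, ht, hxt, hcard⟩ := hx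
  exact ⟨t, ht, ht y (hxt hy), hcard⟩

theorem mem_HSet_succ_card {t y : ZFSet.{u}} (ht : t.IsTransitive) (hy : y ⊆ t) :
    y ∈ HSet (Order.succ t.card).ord.toZFSet := by
  refine ⟨t, ht, hy, ?_⟩
  rw [mk_toSet_toZFSet, card_ord]
  exact ZFSet.cardinalMk_coe_sort.trans_lt (Cardinal.lift_lt.2 (Order.lt_succ _))

/-- The von Neumann set `{o | o ∈ S, o < K}`. -/
noncomputable def toZFSetBelow (K : Ordinal.{u}) (S : Set Ordinal.{u}) : ZFSet.{u} :=
  K.toZFSet.sep fun z => z.rank ∈ S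

theorem mem_toZFSetBelow {K : Ordinal.{u}} {S : Set Ordinal.{u}} {x : ZFSet.{u}} :
    x ∈ toZFSetBelow K S ↔ ∃ o ∈ S, o < K ∧ o.toZFSet = x := by
  rw [toZFSetBelow, ZFSet.mem_sep, mem_toZFSet_iff]
  constructor
  · rintro ⟨⟨o, ho, rfl⟩, hoS⟩
    exact ⟨o, by simpa using hoS, ho, rfl⟩
  · rintro ⟨o, hoS, ho, rfl⟩
    exact ⟨⟨o, ho, rfl⟩, by simpa using hoS⟩

theorem toZFSetBelow_subset (K : Ordinal.{u}) (S : Set Ordinal.{u}) :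
    toZFSetBelow K S ⊆ K.toZFSet := fun _ hx => (ZFSet.mem_sep.1 hx).1

theorem toZFSetBelow_inter_toZFSet {K K' : Ordinal.{u}} (h : K' ≤ K) (S : Set Ordinal.{u}) :
    toZFSetBelow K S ∩ K'.toZFSet = toZFSetBelow K' S := by
  ext x
  rw [ZFSet.mem_inter, mem_toZFSetBelow, mem_toZFSetBelow, mem_toZFSet_iff]
  constructor
  · rintro ⟨⟨o, hoS, -, rfl⟩, o', ho', ho'o⟩
    exact ⟨o, hoS, toZFSet_injective ho'o ▸ ho', rfl⟩
  · rintro ⟨o, hoS, ho, rfl⟩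
    exact ⟨⟨o, hoS, ho.trans_le h, rfl⟩, o, ho, rfl⟩

theorem mk_toSet_toZFSetBelow (K : Ordinal.{u}) (S : Set Ordinal.{u}) :
    #(toZFSetBelow K S).toSet = #↥(S ∩ Set.Iio K) := by
  have : (toZFSetBelow K S).toSet = toZFSet '' (S ∩ Set.Iio K) := by
    ext x
    exact mem_toZFSetBelow.trans (by simp only [Set.mem_image, Set.mem_inter_iff, Set.mem_Iio,
      and_assoc])
  rw [this, mk_image_eq toZFSet_injective]

theorem exists_pairsInjectively_of_isLeast {K σ : Ordinal.{u}} {S : Set Ordinal.{u}}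
    (hSK : S ⊆ Set.Iio K) (hσ : IsLeast S σ) (hσS : lift.{u + 1} σ.card ≤ #S) :
    ∃ F ⊆ K.toZFSet.powerset, PairsInjectively F σ.toZFSet (toZFSetBelow K S) := by
  obtain ⟨e⟩ := (Cardinal.le_def _ _).1 (Cardinal.mk_Iio_ordinal σ ▸ hσS)
  let pair (i : Set.Iio σ) : ZFSet.{u} := {i.1.toZFSet, (e i).1.toZFSet}
  have he_mem (i : Set.Iio σ) : (e i).1.toZFSet ∈ toZFSetBelow K S :=
    mem_toZFSetBelow.2 ⟨_, (e i).2, hSK (e i).2, rfl⟩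
  -- Elements of `σ` lie below `σ = min S` and elements of `S` above it, so a pair determines
  -- which of its members is which.
  have hpair {i : Set.Iio σ} {α a : ZFSet.{u}} (hα : α ∈ σ.toZFSet)
      (ha : a ∈ toZFSetBelow K S) (hαp : α ∈ pair i) (hap : a ∈ pair i) :
      α = i.1.toZFSet ∧ a = (e i).1.toZFSet := by
    obtain ⟨o, ho, rfl⟩ := mem_toZFSet_iff.1 hα
    obtain ⟨τ, hτS, -, rfl⟩ := mem_toZFSetBelow.1 ha
    have hoe : o.toZFSet ≠ (e i).1.toZFSet :=
      toZFSet_injective.ne (ho.trans_le (hσ.2 (e i).2)).ne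
    have hτi : τ.toZFSet ≠ i.1.toZFSet := toZFSet_injective.ne (i.2.trans_le (hσ.2 hτS)).ne'
    exact ⟨(ZFSet.mem_pair.1 hαp).resolve_right hoe, (ZFSet.mem_pair.1 hap).resolve_left hτi⟩
  refine ⟨ZFSet.range pair, fun p hp => ?_, fun α hα => ?_, ?_⟩
  · obtain ⟨i, rfl⟩ := ZFSet.mem_range.1 hp
    refine ZFSet.mem_powerset.2 fun x hx => ?_
    rcases ZFSet.mem_pair.1 hx with rfl | rfl
    · exact toZFSet_mem_toZFSet_iff.2 (i.2.trans (hSK hσ.1))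
    · exact toZFSet_mem_toZFSet_iff.2 (hSK (e i).2)
  · obtain ⟨o, ho, rfl⟩ := mem_toZFSet_iff.1 hα
    exact ⟨_, he_mem ⟨o, ho⟩, _, ZFSet.mem_range.2 ⟨⟨o, ho⟩, rfl⟩, ZFSet.mem_pair.2 (.inl rfl),
      ZFSet.mem_pair.2 (.inr rfl)⟩
  · intro α hα β hβ a ha p hp q hq hαp hap hβq haq
    obtain ⟨i, rfl⟩ := ZFSet.mem_range.1 hp
    obtain ⟨j, rfl⟩ := ZFSet.mem_range.1 hq
    obtain ⟨rfl, rfl⟩ := hpair hα ha hαp hap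
    obtain ⟨rfl, hij⟩ := hpair hβ ha hβq haq
    rw [e.injective (Subtype.ext (toZFSet_injective hij))]

theorem WeaklyShrewd.exists_lt_lift_card_le_mk_inter {K : Ordinal.{u}}
    (h : WeaklyShrewd K.toZFSet) {S : Set Ordinal.{u}} (hSK : S ⊆ Set.Iio K) {σ : Ordinal.{u}}
    (hσ : IsLeast S σ) (hσS : lift.{u + 1} σ.card ≤ #S) :
    ∃ K' < K, lift.{u + 1} σ.card ≤ #↥(S ∩ Set.Iio K') := by
  obtain ⟨F, hFK, hF⟩ := exists_pairsInjectively_of_isLeast hSK hσ hσS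
  set A := toZFSetBelow K S
  set t := K.toZFSet ∪ K.toZFSet.powerset
  have hK := (ZFSet.isOrdinal_toZFSet K).isTransitive
  have ht : t.IsTransitive := hK.union hK.powerset
  have hKt : K.toZFSet ⊆ t := fun _ => ZFSet.mem_union.2 ∘ .inl
  have hsat : SatIn ∅ (HSet (Order.succ t.card).ord.toZFSet) SF.existsMemPairsInjectively
      (val2 A K.toZFSet) :=
    (satIn_existsMemPairsInjectively_iff (fun _ hx _ => HSet.mem_of_mem hx) _ _).2
      ⟨σ.toZFSet, mem_HSet_succ_card ht ((toZFSet_monotone (hSK hσ.1).le).trans hKt),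
        mem_toZFSetBelow.2 ⟨σ, hσ.1, hSK hσ.1, rfl⟩,
        F, mem_HSet_succ_card ht fun _ hp => ZFSet.mem_union.2 (.inr (hFK hp)), hF⟩
  have hKθ : K.toZFSet ∈ (Order.succ t.card).ord.toZFSet := by
    rw [toZFSet_mem_toZFSet_iff, lt_ord, ← card_toZFSet]
    exact (ZFSet.card_mono hKt).trans_lt (Order.lt_succ _)
  obtain ⟨κ', _, -, -, -, hκ'K, hsat'⟩ := h.2 _ _ A SF.fv_existsMemPairsInjectively
    (zCard_ord_toZFSet _) hKθ (toZFSetBelow_subset K S) hsat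
  obtain ⟨K', hK'K, rfl⟩ := mem_toZFSet_iff.1 hκ'K
  obtain ⟨m, -, hm, F', -, hF'⟩ :=
    (satIn_existsMemPairsInjectively_iff (fun _ hx _ => HSet.mem_of_mem hx) _ _).1 hsat'
  rw [toZFSetBelow_inter_toZFSet hK'K.le] at hm hF'
  obtain ⟨τ, hτS, -, rfl⟩ := mem_toZFSetBelow.1 hm
  refine ⟨K', hK'K, ?_⟩
  calc lift.{u + 1} σ.card ≤ lift.{u + 1} τ.card := lift_le.2 (card_le_card (hσ.2 hτS))
    _ = #τ.toZFSet.toSet := (mk_toSet_toZFSet τ).symm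
    _ ≤ #(toZFSetBelow K' S).toSet := hF'.mk_le
    _ = #↥(S ∩ Set.Iio K') := mk_toSet_toZFSetBelow K' S

theorem exists_isLeast_of_ord_cof_lt {K : Ordinal.{u}} (hK : IsPrincipal (· + ·) K)
    (hlim : Order.IsSuccLimit K) (hsing : K.cof.ord < K) :
    ∃ S ⊆ Set.Iio K, ∃ σ, IsLeast S σ ∧ lift.{u + 1} σ.card ≤ #S ∧
      ∀ K' < K, #↥(S ∩ Set.Iio K') < lift.{u + 1} σ.card := by
  set c := K.cof.ord
  obtain ⟨f, hf⟩ := exists_isFundamentalSeq (o := K) rfl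
  set g : Set.Iio c → Ordinal.{u} := fun i => c + f i
  have hg : StrictMono g := fun i j hij => (add_lt_add_iff_left c).2 (hf.strictMono hij)
  refine ⟨insert c (Set.range g), ?_, c, ⟨Set.mem_insert _ _, ?_⟩, ?_, fun K' hK' => ?_⟩
  · rintro _ (rfl | ⟨i, rfl⟩)
    · exact hsing
    · exact hK hsing (f i).2
  · rintro _ (rfl | ⟨i, rfl⟩)
    · exact le_rfl
    · exact le_self_add
  · calc lift.{u + 1} c.card = #(Set.range g) := by
          rw [mk_range_eq g hg.injective, Cardinal.mk_Iio_ordinal]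
      _ ≤ #↥(insert c (Set.range g)) := mk_le_mk_of_subset (Set.subset_insert _ _)
  obtain ⟨_, ⟨i, rfl⟩, hi⟩ := hf.isCofinal_range ⟨K', hK'⟩
  have hsub : insert c (Set.range g) ∩ Set.Iio K' ⊆ insert c (g '' Set.Iio i) := by
    rintro _ ⟨rfl | ⟨j, rfl⟩, hj⟩
    · exact Set.mem_insert _ _
    · have hji : (f j).1 < (f i).1 :=
        le_add_self.trans_lt (lt_of_lt_of_le (a := g j) hj (Subtype.mk_le_mk.1 hi))
      exact Set.mem_insert_of_mem _ ⟨j, hf.strictMono.lt_iff_lt.1 hji, rfl⟩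
  have hIio : #(Set.Iio i) ≤ lift.{u + 1} i.1.card := by
    rw [← Cardinal.mk_Iio_ordinal]
    exact mk_le_of_injective (f := fun j : Set.Iio i => (⟨j.1.1, j.2⟩ : Set.Iio i.1))
      fun j j' h => by simpa [Subtype.ext_iff] using h
  have hcof : ℵ₀ ≤ lift.{u + 1} c.card := by
    rw [card_ord, aleph0_le_lift, aleph0_le_cof_iff, one_lt_cof_iff]
    exact hlim
  calc #↥(insert c (Set.range g) ∩ Set.Iio K') ≤ #(g '' Set.Iio i) + 1 :=
        (mk_le_mk_of_subset hsub).trans mk_insert_le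
    _ ≤ lift.{u + 1} i.1.card + 1 := add_le_add (mk_image_le.trans hIio) le_rfl
    _ < lift.{u + 1} c.card := add_lt_of_lt hcof
        (lift_lt.2 (by rw [card_ord]; exact lt_ord.1 i.2)) (one_lt_aleph0.trans_le hcof)

theorem WeaklyShrewd.le_cof_ord {c : Cardinal.{u}} (h : WeaklyShrewd c.ord.toZFSet) :
    c ≤ c.ord.cof := by
  have hc := h.1.aleph0_le
  refine not_lt.1 fun hsing => ?_
  obtain ⟨S, hSK, σ, hσ, hσS, hsmall⟩ := exists_isLeast_of_ord_cof_lt (isPrincipal_add_ord hc)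
    (isSuccLimit_ord hc) (ord_lt_ord.2 hsing)
  obtain ⟨K', hK', hle⟩ := h.exists_lt_lift_card_le_mk_inter hSK hσ hσS
  exact (hle.trans_lt (hsmall K' hK')).false

/-- If `κ` is a weakly shrewd cardinal, then `κ` is a regular cardinal. -/
theorem weaklyShrewd_regular (κ : ZFSet.{u}) (h : WeaklyShrewd κ) : ZRegular κ := by
  obtain ⟨c, rfl⟩ := h.1.1.exists_eq_ord_toZFSet
  exact zRegular_of_le_cof_ord h.1 h.le_cof_ord
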